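/- Let K ≥ 1, n_t ≥ 1, n_r ≥ 1 be integers and let r be a real number with 0 ≤ r ≤ min(n_t, n_r/K). Then min over k ∈ {1, …, K} of d*_{k·n_t, n_r}(k·r) equals min(d*_{n_t, n_r}(r), d*_{K·n_t, n_r}(K·r)); i.e., the minimum over the number k of users in outage is always attained either at k = 1 (single-user error event) or at k = K (all-users error event). -/

import Mathlib

/-!
Writing `φ x = fract x * (1 - fract x)`, one has `d*_{m,n}(x) = (m - x)(n - x) + φ x`, so
`g k := d*_{k n_t, n_r}(k r) = k (n_t - r)(n_r - k r) + φ (k r)`. For `i ≤ j`,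
`g j - g i = (j - i)(n_t - r)(n_r - (i + j) r) + φ (j r) - φ (i r)`, and the two factors of the
product differ from `i r - j r` and `-(i r + j r)` by integers. Since `φ x` is the maximum of
`(x - q)(q + 1 - x)` over integers `q`, this forces the `φ` terms never to outweigh the product:
`g i ≤ g j` when `(i + j) r ≤ n_r` and `g j ≤ g i` otherwise. Comparing each `k` with `1` or
with `K` according to the sign of `n_r - (1 + k) r` gives the claim.
-/

/-- The Zheng–Tse diversity-multiplexing tradeoff curve `d*_{m,n}` of an `m × n` MIMO
Rayleigh point-to-point channel: the continuous piecewise-linear function with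
`d*(k) = (m−k)(n−k)` at integers `k` and affine on each interval `[k, k+1]`; explicitly,
for `k = ⌊r⌋`, `d*(r) = (m−k)(n−k) − (r−k)(m+n−2k−1)`. -/
noncomputable def dstar (m n : ℕ) (r : ℝ) : ℝ :=
  ((m : ℝ) - (⌊r⌋ : ℝ)) * ((n : ℝ) - (⌊r⌋ : ℝ)) -
    (r - (⌊r⌋ : ℝ)) * ((m : ℝ) + (n : ℝ) - 2 * (⌊r⌋ : ℝ) - 1)

noncomputable def fractParabola (x : ℝ) : ℝ := Int.fract x * (1 - Int.fract x)

lemma dstar_eq_sub_mul_sub_add_fractParabola (m n : ℕ) (x : ℝ) :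
    dstar m n x = ((m : ℝ) - x) * ((n : ℝ) - x) + fractParabola x := by
  rw [dstar, fractParabola, Int.fract]
  ring

lemma fractParabola_neg (x : ℝ) : fractParabola (-x) = fractParabola x := by
  by_cases h : Int.fract x = 0
  · rw [fractParabola, fractParabola, Int.fract_neg_eq_zero.mpr h, h]
  · rw [fractParabola, fractParabola, Int.fract_neg h]
    ring

lemma sub_mul_sub_le_fractParabola (x : ℝ) (q : ℤ) :
    (x - q) * (q + 1 - x) ≤ fractParabola x := by
  have hf0 := Int.fract_nonneg x
  have hf1 := Int.fract_lt_one x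
  obtain ⟨d, hd⟩ : ∃ d : ℤ, d = ⌊x⌋ - q := ⟨_, rfl⟩
  have hdx : (d : ℝ) = ⌊x⌋ - q := by exact_mod_cast hd
  have key : fractParabola x - (x - q) * (q + 1 - x) = d * (d - 1 + 2 * Int.fract x) := by
    simp only [fractParabola, Int.fract, hdx]
    ring
  rcases (by omega : d ≤ -1 ∨ d = 0 ∨ 1 ≤ d) with hd0 | rfl | hd0
  · have : (d : ℝ) ≤ -1 := by exact_mod_cast hd0
    nlinarith
  · simp only [Int.cast_zero, zero_mul] at key
    linarith
  · have : (1 : ℝ) ≤ d := by exact_mod_cast hd0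
    nlinarith

/- Bound `φ b` below at `q = M + ⌊a⌋` or at `q = L - ⌊a⌋ - 1`: the excess of `φ a - φ b` over `P Q`
is then `-P c` or `Q c` with `c = L - M - 2⌊a⌋ - 1`, and one of these choices makes it `≤ 0`. -/
lemma fractParabola_sub_le_mul {a b P Q : ℝ} {M L : ℤ} (hP : 0 ≤ P) (hQ : 0 ≤ Q)
    (hM : P + b - a = M) (hL : Q + a + b = L) :
    fractParabola a - fractParabola b ≤ P * Q := by
  have ha : fractParabola a = (a - ⌊a⌋) * (⌊a⌋ + 1 - a) := by
    rw [fractParabola, Int.fract]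
    ring
  obtain rfl : b = M + a - P := by linarith
  obtain rfl : Q = L - 2 * a - M + P := by linarith
  rcases le_or_gt 0 (L - M - 2 * ⌊a⌋ - 1) with hc | hc
  · have hb := sub_mul_sub_le_fractParabola (M + a - P) (M + ⌊a⌋)
    have hc' : (0 : ℝ) ≤ L - M - 2 * ⌊a⌋ - 1 := by exact_mod_cast hc
    push_cast at hb
    nlinarith [mul_nonneg hP hc']
  · have hb := sub_mul_sub_le_fractParabola (M + a - P) (L - ⌊a⌋ - 1)
    have hc' : (0 : ℝ) ≤ M + 2 * ⌊a⌋ + 1 - L := by exact_mod_cast (by omega)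
    push_cast at hb
    nlinarith [mul_nonneg hQ hc']

section
variable (nt nr : ℕ) {r : ℝ} {i j : ℕ}

lemma dstar_mul_le_of_add_mul_le (hrt : r ≤ nt) (hij : i ≤ j) (h : (i + j) * r ≤ nr) :
    dstar (i * nt) nr (i * r) ≤ dstar (j * nt) nr (j * r) := by
  have hji : (0 : ℝ) ≤ j - i := sub_nonneg.2 (by exact_mod_cast hij)
  have := fractParabola_sub_le_mul (a := i * r) (b := j * r) (M := (j - i : ℤ) * nt) (L := nr)
    (mul_nonneg hji (sub_nonneg.2 hrt)) (sub_nonneg.2 h) (by push_cast; ring) (by push_cast; ring)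
  rw [dstar_eq_sub_mul_sub_add_fractParabola, dstar_eq_sub_mul_sub_add_fractParabola]
  push_cast
  linarith

lemma dstar_mul_le_of_le_add_mul (hrt : r ≤ nt) (hij : i ≤ j) (h : nr ≤ (i + j) * r) :
    dstar (j * nt) nr (j * r) ≤ dstar (i * nt) nr (i * r) := by
  have hji : (0 : ℝ) ≤ j - i := sub_nonneg.2 (by exact_mod_cast hij)
  have := fractParabola_sub_le_mul (a := -(j * r)) (b := -(i * r)) (M := (j - i : ℤ) * nt)
    (L := -nr) (mul_nonneg hji (sub_nonneg.2 hrt)) (sub_nonneg.2 h) (by push_cast; ring)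
    (by push_cast; ring)
  rw [fractParabola_neg, fractParabola_neg] at this
  rw [dstar_eq_sub_mul_sub_add_fractParabola, dstar_eq_sub_mul_sub_add_fractParabola]
  push_cast
  linarith

end

theorem mac_dmt_min_attained_at_ends_general (K nt nr : ℕ) (hK : 1 ≤ K)
    (r : ℝ) (hr1 : r ≤ min (nt : ℝ) ((nr : ℝ) / (K : ℝ))) :
    (Finset.Icc 1 K).inf' (Finset.nonempty_Icc.mpr hK)
      (fun k => dstar (k * nt) nr ((k : ℝ) * r)) =
      min (dstar nt nr r) (dstar (K * nt) nr ((K : ℝ) * r)) := by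
  have hrt : r ≤ nt := hr1.trans (min_le_left _ _)
  refine le_antisymm (le_min ?_ (Finset.inf'_le _ (Finset.right_mem_Icc.2 hK)))
    (Finset.le_inf' _ _ fun k hk => ?_)
  · simpa only [Nat.cast_one, one_mul] using
      Finset.inf'_le (fun k => dstar (k * nt) nr ((k : ℝ) * r)) (Finset.left_mem_Icc.2 hK)
  obtain ⟨hk1, hkK⟩ := Finset.mem_Icc.1 hk
  by_cases h : (1 + k) * r ≤ nr
  · simpa using min_le_of_left_le (dstar_mul_le_of_add_mul_le nt nr hrt hk1 (by simpa using h))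
  · have hr : 0 < r := by
      by_contra! hr
      nlinarith [(Nat.cast_nonneg nr : (0 : ℝ) ≤ nr)]
    have hKk : (1 + k : ℝ) ≤ k + K := by
      have : (1 : ℝ) ≤ K := by exact_mod_cast hK
      linarith
    exact min_le_of_right_le (dstar_mul_le_of_le_add_mul nt nr hrt hkK (by nlinarith))

/-- For `0 ≤ r ≤ min(n_t, n_r/K)`, the minimum over the number `k` of users in outage,
`min_{k=1,…,K} d*_{k·n_t, n_r}(k·r)`, is always attained either at `k = 1` (single-user
error event) or at `k = K` (all-users error event). -/
theorem mac_dmt_min_attained_at_ends (K nt nr : ℕ) (hK : 1 ≤ K) (hnt : 1 ≤ nt) (hnr : 1 ≤ nr)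
    (r : ℝ) (hr0 : 0 ≤ r) (hr1 : r ≤ min (nt : ℝ) ((nr : ℝ) / (K : ℝ))) :
    (Finset.Icc 1 K).inf' (Finset.nonempty_Icc.mpr hK)
      (fun k => dstar (k * nt) nr ((k : ℝ) * r)) =
      min (dstar nt nr r) (dstar (K * nt) nr ((K : ℝ) * r)) :=
  mac_dmt_min_attained_at_ends_general K nt nr hK r hr1
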